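/- arXiv:math/0112211 — 5 statements merged into one kernel-verified Lean document; each statement's English description precedes it below -/
import Mathlib

section
/- Let N ≥ 1 and let ρ ∈ ℂ[[t]] have zero constant coefficient and nonzero coefficient of t. Then ρ^N lies in ℂ[[t^N]] (i.e., the coefficient of t^m in ρ^N vanishes whenever N does not divide m) if and only if ρ is N-special, i.e., the coefficient of t^n in ρ vanishes for every n with n ≢ 1 (mod N). -/
open PowerSeries

/-- Substitution of the power series `a` (assumed to have zero constant
coefficient) into the power series `g`:  `substC a g = g ∘ a = g(a)`. -/
noncomputable def PowerSeries.substC (a g : PowerSeries ℂ) : PowerSeries ℂ :=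
  PowerSeries.mk fun n =>
    ∑ k ∈ Finset.range (n + 1), PowerSeries.coeff k g * PowerSeries.coeff n (a ^ k)

/-- A series `ρ ∈ ℂ[[t]]` is `N`-special if its constant coefficient is `0`,
its coefficient of `t^n` vanishes for every `n ≢ 1 (mod N)`, and its
coefficient of `t` is nonzero. -/
def IsNSpecial (N : ℕ) (ρ : PowerSeries ℂ) : Prop :=
  PowerSeries.constantCoeff ρ = 0 ∧
    (∀ n : ℕ, n % N ≠ 1 % N → PowerSeries.coeff n ρ = 0) ∧
    PowerSeries.coeff 1 ρ ≠ 0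
/-!
Let `ζ` be a primitive `N`-th root of unity. Substituting `t ↦ ζ t` multiplies the coefficient
of `t^n` by `ζ^n`, so a series is supported on exponents `≡ r (mod N)` exactly when it is an
eigenvector of this substitution with eigenvalue `ζ^r`. If `ρ^N` is supported on multiples of
`N`, then `ρ(ζ t)^N = ρ(t)^N`, and since `X^N - Y^N = ∏ (X - μ Y)` over the `N`-th roots of
unity `μ`, in the domain `ℂ[[t]]` we get `ρ(ζ t) = ζ^i ρ(t)` for some `i`. Thus `ρ` is
supported on exponents `≡ i`, and `coeff 1 ρ ≠ 0` forces `i ≡ 1`. The converse is the same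
computation read backwards.
-/

theorem PowerSeries.rescale_pow_eq_C_pow_mul_pow {R : Type*} [CommSemiring R] {ζ : R}
    {f : R⟦X⟧} {r : ℕ} (hf : rescale ζ f = C (ζ ^ r) * f) (k : ℕ) :
    rescale ζ (f ^ k) = C (ζ ^ (r * k)) * f ^ k := by
  rw [map_pow, hf, mul_pow, ← map_pow, ← pow_mul]

section IsDomain

variable {R : Type*} [CommRing R] [IsDomain R] {ζ : R} {N : ℕ} [NeZero N]

theorem IsPrimitiveRoot.eq_pow_mul_of_pow_eq_pow (hζ : IsPrimitiveRoot ζ N)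
    {x y : R} (h : x ^ N = y ^ N) : ∃ i < N, x = ζ ^ i * y := by
  have : ∏ μ ∈ Polynomial.nthRootsFinset N (1 : R), (x - μ * y) = 0 := by
    rw [← hζ.pow_sub_pow_eq_prod_sub_mul x y (NeZero.pos N), h, sub_self]
  obtain ⟨μ, hμ, hxμ⟩ := Finset.prod_eq_zero_iff.mp this
  obtain ⟨i, hi, rfl⟩ :=
    hζ.eq_pow_of_pow_eq_one ((Polynomial.mem_nthRootsFinset (NeZero.pos N) 1).mp hμ)
  exact ⟨i, hi, sub_eq_zero.mp hxμ⟩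

theorem PowerSeries.rescale_eq_C_pow_mul_iff (hζ : IsPrimitiveRoot ζ N) (f : R⟦X⟧) (r : ℕ) :
    rescale ζ f = C (ζ ^ r) * f ↔ ∀ n, ¬ n ≡ r [MOD N] → coeff n f = 0 := by
  have hpow : ∀ n, ζ ^ n = ζ ^ r ↔ n ≡ r [MOD N] := fun n => by
    rw [(hζ.isOfFinOrder (NeZero.ne N)).pow_eq_pow_iff_modEq, ← hζ.eq_orderOf]
  simp only [PowerSeries.ext_iff, coeff_rescale, coeff_C_mul, mul_eq_mul_right_iff, hpow,
    or_iff_not_imp_left]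

end IsDomain

/-- For `ρ` with zero constant coefficient and nonzero linear coefficient,
`ρ^N ∈ ℂ[[t^N]]` iff `ρ` is `N`-special. -/
theorem stmt1 (N : ℕ) (hN : 1 ≤ N) (ρ : PowerSeries ℂ)
    (h0 : PowerSeries.constantCoeff ρ = 0)
    (h1 : PowerSeries.coeff 1 ρ ≠ 0) :
    (∀ m : ℕ, ¬ N ∣ m → PowerSeries.coeff m (ρ ^ N) = 0) ↔ IsNSpecial N ρ := by
  have : NeZero N := ⟨by omega⟩
  obtain ⟨ζ, hζ⟩ : ∃ ζ : ℂ, IsPrimitiveRoot ζ N :=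
    ⟨_, Complex.isPrimitiveRoot_exp N (NeZero.ne N)⟩
  have hiff := PowerSeries.rescale_eq_C_pow_mul_iff hζ
  simp only [← Nat.modEq_zero_iff_dvd, ← hiff, pow_zero, map_one, one_mul]
  constructor
  · intro hρN
    have hpow : (rescale ζ ρ) ^ N = ρ ^ N := by rw [← map_pow, hρN]
    obtain ⟨i, -, hi⟩ :=
      (hζ.map_of_injective (C_injective (R := ℂ))).eq_pow_mul_of_pow_eq_pow hpow
    have hρ := (hiff ρ i).mp (by rwa [← map_pow] at hi)
    have h1i : 1 ≡ i [MOD N] := by_contra fun h => h1 (hρ 1 h)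
    exact ⟨h0, fun n hn => hρ n fun h => hn (h.trans h1i.symm), h1⟩
  · rintro ⟨-, hρ, -⟩
    have := PowerSeries.rescale_pow_eq_C_pow_mul_pow ((hiff ρ 1).mpr hρ) N
    rwa [one_mul, hζ.pow_eq_one, map_one, one_mul] at this
end

section
/- Let N ≥ 1. Every N-special series ρ ∈ ℂ[[t]] has a unique compositional inverse, i.e., there exists a unique series ρ̄ ∈ ℂ[[t]] with zero constant coefficient such that ρ∘ρ̄ = t = ρ̄∘ρ, and this ρ̄ is again N-special. -/
open PowerSeries

/-!
Mathlib already provides a two-sided compositional inverse `substInvOfIsUnit` of any series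
`ρ = u t + O(t²)` with `u` a unit, and a left inverse always equals a right inverse, which gives
uniqueness. For `ζ` a primitive `N`-th root of unity, `ρ` is `N`-special exactly when
`ρ(ζ t) = ζ ρ(t)`, i.e. when `ρ` commutes with the rotation `t ↦ ζ t`; the inverse of a series
commuting with the rotation commutes with it as well.
-/

namespace PowerSeries

variable {R : Type*} [CommRing R]

theorem coeff_pow_eq_zero_of_lt {a : R⟦X⟧} (ha : constantCoeff a = 0) {n k : ℕ} (h : n < k) :
    coeff n (a ^ k) = 0 := by
  obtain ⟨b, rfl⟩ := X_dvd_iff.mpr ha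
  rw [mul_pow, coeff_X_pow_mul', if_neg (by omega)]

theorem substC_eq_subst {a : ℂ⟦X⟧} (ha : constantCoeff a = 0) (g : ℂ⟦X⟧) :
    substC a g = subst a g := by
  ext n
  rw [coeff_subst' (HasSubst.of_constantCoeff_zero' ha),
    finsum_eq_sum_of_support_subset (s := Finset.range (n + 1))]
  · simp [substC, coeff_mk]
  · intro k hk
    by_contra hkn
    simp only [Finset.coe_range, Set.mem_Iio, not_lt] at hkn
    exact hk (by simp only [coeff_pow_eq_zero_of_lt ha (by omega : n < k), smul_zero])

theorem eq_of_subst_eq_X {f g σ : R⟦X⟧} (hf : constantCoeff f = 0) (hσ : constantCoeff σ = 0)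
    (hgf : subst f g = X) (hfσ : subst σ f = X) : σ = g := by
  have hf' := HasSubst.of_constantCoeff_zero' hf
  have hσ' := HasSubst.of_constantCoeff_zero' hσ
  calc σ = subst σ (subst f g) := by rw [hgf, subst_X hσ']
    _ = g := by rw [subst_comp_subst_apply hf' hσ', hfσ, X_subst]

theorem rescale_eq_smul_of_subst_eq_X {f g : R⟦X⟧} (hf : constantCoeff f = 0)
    (hg : constantCoeff g = 0) (hfg : subst g f = X) (hgf : subst f g = X) {c : R}
    (h : rescale c f = c • f) : rescale c g = c • g := by
  have hf' := HasSubst.of_constantCoeff_zero' hf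
  have hg' := HasSubst.of_constantCoeff_zero' hg
  have hcX := HasSubst.smul_X' (R := R) c
  have hcg : HasSubst (c • g) := HasSubst.of_constantCoeff_zero' (by simp [hg])
  have hf_smul : subst (c • g) f = c • X := by
    calc subst (c • g) f = subst (subst g (c • X : R⟦X⟧)) f := by
          rw [subst_smul hg', subst_X hg']
      _ = subst g (c • f) := by rw [← subst_comp_subst_apply hcX hg', ← rescale_eq_subst, h]
      _ = c • X := by rw [subst_smul hg', hfg]
  calc rescale c g = subst (c • g) (subst f g) := by
        rw [subst_comp_subst_apply hf' hcg, hf_smul, rescale_eq_subst]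
    _ = c • g := by rw [hgf, subst_X hcg]

theorem rescale_eq_smul_iff_of_isPrimitiveRoot [IsDomain R] {ζ : R} {N : ℕ}
    (hζ : IsPrimitiveRoot ζ N) (hN : N ≠ 0) (f : R⟦X⟧) :
    rescale ζ f = ζ • f ↔ ∀ n, n % N ≠ 1 % N → coeff n f = 0 := by
  have hpow (n : ℕ) : ζ ^ n = ζ ↔ n % N = 1 % N := by
    simpa [← hζ.eq_orderOf] using (hζ.isOfFinOrder hN).pow_inj_mod (n := n) (m := 1)
  simp only [PowerSeries.ext_iff, coeff_rescale, coeff_smul, smul_eq_mul, mul_eq_mul_right_iff,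
    hpow]
  exact forall_congr' fun n => or_iff_not_imp_left

end PowerSeries

/-- Every `N`-special series has a unique compositional inverse, which is
again `N`-special. -/
theorem stmt3 (N : ℕ) (hN : 1 ≤ N) (ρ : PowerSeries ℂ) (h : IsNSpecial N ρ) :
    ∃ ρbar : PowerSeries ℂ,
      (PowerSeries.constantCoeff ρbar = 0 ∧
        PowerSeries.substC ρbar ρ = PowerSeries.X ∧
        PowerSeries.substC ρ ρbar = PowerSeries.X) ∧
      IsNSpecial N ρbar ∧
      ∀ σ : PowerSeries ℂ,
        (PowerSeries.constantCoeff σ = 0 ∧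
          PowerSeries.substC σ ρ = PowerSeries.X ∧
          PowerSeries.substC ρ σ = PowerSeries.X) → σ = ρbar := by
  obtain ⟨hρ0, hρN, hρ1⟩ := h
  have hu : IsUnit (coeff 1 ρ) := hρ1.isUnit
  set ρbar := ρ.substInvOfIsUnit hu
  have hbar0 : constantCoeff ρbar = 0 := constantCoeff_substInvOfIsUnit ρ hu
  have right : subst ρbar ρ = X := subst_substInvOfIsUnit_right ρ hρ0 hu
  have left : subst ρ ρbar = X := subst_substInvOfIsUnit_left ρ hρ0 hu
  have hζ := Complex.isPrimitiveRoot_exp N (by omega)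
  have hρrot : rescale _ ρ = _ • ρ :=
    (rescale_eq_smul_iff_of_isPrimitiveRoot hζ (by omega) ρ).2 hρN
  have hbarrot := rescale_eq_smul_of_subst_eq_X hρ0 hbar0 right left hρrot
  refine ⟨ρbar, ⟨hbar0, by rwa [substC_eq_subst hbar0], by rwa [substC_eq_subst hρ0]⟩,
    ⟨hbar0, (rescale_eq_smul_iff_of_isPrimitiveRoot hζ (by omega) ρbar).1 hbarrot, ?_⟩, ?_⟩
  · simp [ρbar, coeff_one_substInvOfIsUnit, hρ1]
  · rintro σ ⟨hσ0, hσ, -⟩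
    rw [substC_eq_subst hσ0] at hσ
    exact eq_of_subst_eq_X hρ0 hσ0 left hσ
end

section
/- Let N ≥ 1 and let ρ ∈ ℂ[[t]] be N-special with ρ(t)^N = t^N. Then there exists ε ∈ ℂ with ε^N = 1 such that ρ = ε·t. (Hence the kernel of the homomorphism μ : Aut_N(O) → Aut(O) consists exactly of the substitutions t ↦ ε t with ε an N-th root of unity, giving a copy of ℤ/Nℤ.) -/
open PowerSeries

/-!
Since `ρ` has no constant term, `ρ = t·q`, and cancelling `t^N` in the integral domain `ℂ[[t]]`
gives `q^N = 1`. The image of a primitive `N`-th root of unity `ζ ∈ ℂ` is still a primitive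
`N`-th root of unity in `ℂ[[t]]`, and in a domain every `N`-th root of unity is a power of a
primitive one; hence `q` is the constant `ζ^i`.
-/

namespace PowerSeries

variable {R : Type*} [CommRing R] [IsDomain R]

theorem eq_C_of_pow_eq_one {N : ℕ} [NeZero N] {ζ : R} (hζ : IsPrimitiveRoot ζ N)
    {q : R⟦X⟧} (hq : q ^ N = 1) : ∃ ε : R, ε ^ N = 1 ∧ q = C ε := by
  obtain ⟨i, -, hi⟩ := (hζ.map_of_injective (C_injective (R := R))).eq_pow_of_pow_eq_one hq
  exact ⟨ζ ^ i, by rw [← pow_mul, mul_comm, pow_mul, hζ.pow_eq_one, one_pow], by rw [← hi, map_pow]⟩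

theorem pow_eq_one_of_X_mul_pow_eq_X_pow {N : ℕ} {q : R⟦X⟧} (h : (X * q) ^ N = X ^ N) :
    q ^ N = 1 :=
  mul_left_cancel₀ (pow_ne_zero N X_ne_zero) (by rw [mul_one, ← mul_pow, h])

end PowerSeries

/-- If `ρ` is `N`-special and `ρ^N = t^N`, then `ρ = ε·t` for some `N`-th
root of unity `ε`. -/
theorem stmt6 (N : ℕ) (hN : 1 ≤ N) (ρ : PowerSeries ℂ) (h : IsNSpecial N ρ)
    (hρ : ρ ^ N = PowerSeries.X ^ N) :
    ∃ ε : ℂ, ε ^ N = 1 ∧ ρ = PowerSeries.C ε * PowerSeries.X := by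
  have : NeZero N := ⟨by omega⟩
  obtain ⟨q, rfl⟩ : X ∣ ρ := X_dvd_iff.mpr h.1
  obtain ⟨ε, hε, rfl⟩ := eq_C_of_pow_eq_one (Complex.isPrimitiveRoot_exp N (NeZero.ne N))
    (pow_eq_one_of_X_mul_pow_eq_X_pow hρ)
  exact ⟨ε, hε, mul_comm _ _⟩
end

section
/- Let N ≥ 1 and let v ∈ ℂ[[t]]. The ℂ-linear derivation D_v of ℂ[[t]] defined by D_v(f) = v · f′ (where f′ is the formal derivative) maps the subalgebra ℂ[[t^N]] into itself if and only if the coefficient of t^n in v vanishes for every n with n ≢ 1 (mod N). -/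
open PowerSeries

/-! Grade `ℂ[[t]]` by exponents modulo `N`: `ℂ[[t^N]]` is the degree-`0` part, `f ↦ f′` lowers
the degree by one and multiplication adds degrees, so `v` of degree `1` preserves `ℂ[[t^N]]`.
Conversely `v · (t^N)′ = N t^(N-1) v` has coefficient `N · coeff n v` at `t^(n+N-1)`, an exponent
divisible by `N` exactly when `n ≡ 1`. -/

namespace PowerSeries

variable {R : Type*}

def IsSupportedMod [Semiring R] (N : ℕ) (a : ZMod N) (f : R⟦X⟧) : Prop :=
  ∀ n : ℕ, (n : ZMod N) ≠ a → coeff n f = 0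

section Semiring
variable [Semiring R] {N : ℕ} {a b : ZMod N} {f g : R⟦X⟧}

theorem isSupportedMod_zero_iff :
    IsSupportedMod N 0 f ↔ ∀ m : ℕ, ¬ N ∣ m → coeff m f = 0 := by
  simp only [IsSupportedMod, ne_eq, ZMod.natCast_eq_zero_iff]

theorem isSupportedMod_one_iff :
    IsSupportedMod N 1 f ↔ ∀ n : ℕ, n % N ≠ 1 % N → coeff n f = 0 := by
  refine forall_congr' fun n => ?_
  rw [Ne, Ne, ← ZMod.natCast_eq_natCast_iff', Nat.cast_one]

theorem isSupportedMod_X_pow : IsSupportedMod N 0 (X ^ N : R⟦X⟧) := by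
  intro n hn
  rw [coeff_X_pow, if_neg]
  rintro rfl
  exact hn (ZMod.natCast_self _)

theorem IsSupportedMod.mul (hf : IsSupportedMod N a f) (hg : IsSupportedMod N b g) :
    IsSupportedMod N (a + b) (f * g) := by
  intro n hn
  rw [coeff_mul]
  refine Finset.sum_eq_zero fun ⟨i, j⟩ hij => ?_
  rw [Finset.HasAntidiagonal.mem_antidiagonal] at hij
  by_cases hi : (i : ZMod N) = a
  · have hj : (j : ZMod N) ≠ b := by
      rintro rfl
      exact hn (by rw [← hij, Nat.cast_add, hi])
    rw [hg j hj, mul_zero]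
  · rw [hf i hi, zero_mul]

end Semiring

theorem IsSupportedMod.derivative [CommSemiring R] {N : ℕ} {a : ZMod N} {f : R⟦X⟧}
    (hf : IsSupportedMod N a f) : IsSupportedMod N (a - 1) (d⁄dX R f) := by
  intro n hn
  rw [coeff_derivative, hf (n + 1) (by rwa [Nat.cast_succ, Ne, ← eq_sub_iff_add_eq]), zero_mul]

theorem coeff_mul_derivative_X_pow_succ [CommSemiring R] (v : R⟦X⟧) (n k : ℕ) :
    coeff (n + k) (v * d⁄dX R (X ^ (k + 1))) = (k + 1) • coeff n v := by
  rw [derivative_pow, derivative_X, mul_one, Nat.add_sub_cancel, ← mul_assoc, coeff_mul_X_pow,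
    mul_comm, ← nsmul_eq_mul, map_nsmul]

theorem IsSupportedMod.of_mul_derivative_X_pow [CommSemiring R] [IsAddTorsionFree R] {k : ℕ}
    {v : R⟦X⟧} (hv : IsSupportedMod (k + 1) 0 (v * d⁄dX R (X ^ (k + 1)))) :
    IsSupportedMod (k + 1) 1 v := by
  intro n hn
  have hnk : ((n + k : ℕ) : ZMod (k + 1)) ≠ 0 := by
    rwa [Nat.cast_add, ← ZMod.natCast_self' k, add_comm (n : ZMod (k + 1)), Ne, add_right_inj]
  rw [← nsmul_eq_zero_iff_right k.succ_ne_zero, ← coeff_mul_derivative_X_pow_succ]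
  exact hv (n + k) hnk

end PowerSeries

/-- The derivation `D_v : f ↦ v·f′` maps `ℂ[[t^N]]` into itself iff the
coefficient of `t^n` in `v` vanishes for all `n ≢ 1 (mod N)`. -/
theorem stmt10 (N : ℕ) (hN : 1 ≤ N) (v : PowerSeries ℂ) :
    (∀ f : PowerSeries ℂ, (∀ m : ℕ, ¬ N ∣ m → PowerSeries.coeff m f = 0) →
      ∀ m : ℕ, ¬ N ∣ m →
        PowerSeries.coeff m (v * PowerSeries.derivative ℂ f) = 0) ↔
    ∀ n : ℕ, n % N ≠ 1 % N → PowerSeries.coeff n v = 0 := by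
  obtain ⟨k, rfl⟩ := Nat.exists_eq_add_of_le' hN
  simp only [← isSupportedMod_zero_iff, ← isSupportedMod_one_iff]
  constructor
  · exact fun h => IsSupportedMod.of_mul_derivative_X_pow (h _ isSupportedMod_X_pow)
  · intro hv f hf
    simpa using hv.mul hf.derivative
end

section
/- Let N ≥ 1 and let σ be a ℂ-algebra automorphism of ℂ[[t]] with σ^N = id and σ^j ≠ id for all 0 < j < N. Then there exist a series u ∈ ℂ[[t]] with zero constant coefficient and nonzero coefficient of t, and a primitive N-th root of unity ε ∈ ℂ, such that σ(u) = ε·u. (Thus every finite-order automorphism of the formal disc admits a special coordinate, so the set of special coordinates is nonempty.) -/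
/-!
The linear coefficient `c` of `σ t` is multiplicative along the powers of `σ`, so `c ^ N = 1`.
It is a primitive `N`-th root of unity: if `c ^ l = 1` then `σ ^ l` is tangent to the identity,
and an automorphism `t ↦ t + a t ^ n + …` (`a ≠ 0`) has `m`-th power `t ↦ t + m a t ^ n + …`,
so in characteristic zero no such automorphism has finite order. Finally the eigen-average
`u = ∑_{j < N} c⁻ʲ σʲ t` satisfies `σ u = c u` and has linear coefficient `N ≠ 0`.
-/

open PowerSeries

theorem smul_sum_range_inv_pow_smul_pow_smul {K M G : Type*} [Field K] [AddCommGroup M]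
    [Module K M] [Monoid G] [DistribMulAction G M] [SMulCommClass G K M] {g : G} {N : ℕ}
    (hg : g ^ N = 1) {c : K} (hc : c ^ N = 1) (x : M) :
    g • ∑ j ∈ Finset.range N, c⁻¹ ^ j • (g ^ j) • x =
      c • ∑ j ∈ Finset.range N, c⁻¹ ^ j • (g ^ j) • x := by
  rcases N.eq_zero_or_pos with rfl | hN
  · simp
  have hc0 : c ≠ 0 := by
    rintro rfl
    simp [zero_pow hN.ne'] at hc
  set f : ℕ → M := fun j => c⁻¹ ^ j • (g ^ j) • x
  have hshift : ∀ j, g • f j = c • f (j + 1) := by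
    intro j
    simp only [f, smul_comm g, pow_succ', mul_smul, smul_inv_smul₀ hc0]
  have hrot : ∑ j ∈ Finset.range N, f (j + 1) = ∑ j ∈ Finset.range N, f j := by
    have h := (Finset.sum_range_succ' f N).symm.trans (Finset.sum_range_succ f N)
    rw [show f N = f 0 by simp [f, hg, hc]] at h
    exact add_right_cancel h
  rw [Finset.smul_sum, Finset.sum_congr rfl fun j _ => hshift j, ← Finset.smul_sum, hrot]

namespace PowerSeries

section CommRing

variable {R : Type*} [CommRing R]

theorem X_pow_dvd_map_sub_map {F : Type*} [FunLike F R⟦X⟧ R⟦X⟧] [RingHomClass F R⟦X⟧ R⟦X⟧]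
    (φ : F) (hφ : X ∣ φ X) {n : ℕ} {f g : R⟦X⟧} (h : X ^ n ∣ f - g) :
    X ^ n ∣ φ f - φ g := by
  obtain ⟨r, hr⟩ := h
  rw [← map_sub, hr, map_mul, map_pow]
  exact (pow_dvd_pow_of_dvd hφ n).mul_right _

theorem X_pow_succ_dvd_pow_sub_X_pow {f : R⟦X⟧} (hf : X ^ 2 ∣ f - X) (n : ℕ) :
    X ^ (n + 1) ∣ f ^ n - X ^ n := by
  obtain ⟨s, hs⟩ := hf
  have hf : f = X * (1 + X * s) := by linear_combination hs
  have key : f ^ n - X ^ n = X ^ n * ((1 + X * s) ^ n - 1 ^ n) := by rw [hf, mul_pow]; ring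
  rw [key, pow_succ]
  refine mul_dvd_mul_left _ (dvd_trans ⟨s, by ring⟩ (sub_dvd_pow_sub_pow _ _ n))

theorem algEquiv_apply_coe_of_apply_X (σ : R⟦X⟧ ≃ₐ[R] R⟦X⟧) (hσ : σ X = X)
    (p : Polynomial R) : σ p = p := by
  have : (σ : R⟦X⟧ →ₐ[R] R⟦X⟧).comp (Polynomial.coeToPowerSeries.algHom R) =
      Polynomial.coeToPowerSeries.algHom R :=
    Polynomial.algHom_ext (by simp [Polynomial.coeToPowerSeries.algHom_apply, hσ])
  simpa [Polynomial.coeToPowerSeries.algHom_apply] using congr($this p)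

theorem algEquiv_eq_one_of_apply_X (σ : R⟦X⟧ ≃ₐ[R] R⟦X⟧) (hσ : σ X = X) : σ = 1 := by
  ext f n
  have htrunc : X ^ (n + 1) ∣ f - (trunc (n + 1) f : R⟦X⟧) :=
    ⟨_, sub_eq_of_eq_add (eq_X_pow_mul_shift_add_trunc (n + 1) f)⟩
  have hσtrunc := X_pow_dvd_map_sub_map σ (by rw [hσ]) htrunc
  rw [algEquiv_apply_coe_of_apply_X σ hσ] at hσtrunc
  have hdvd : X ^ (n + 1) ∣ σ f - f := by
    simpa using dvd_sub hσtrunc htrunc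
  simpa [sub_eq_zero] using X_pow_dvd_iff.1 hdvd n n.lt_succ_self

theorem algEquiv_apply_C (σ : R⟦X⟧ ≃ₐ[R] R⟦X⟧) (c : R) : σ (C c) = C c :=
  σ.commutes c

theorem algEquiv_pow_succ_apply (σ : R⟦X⟧ ≃ₐ[R] R⟦X⟧) (i : ℕ) (f : R⟦X⟧) :
    (σ ^ (i + 1)) f = σ ((σ ^ i) f) := by
  rw [pow_succ', AlgEquiv.mul_apply]

theorem X_sq_dvd_pow_apply_X_sub (σ : R⟦X⟧ ≃ₐ[R] R⟦X⟧) {c : R} (hc : X ^ 2 ∣ σ X - C c * X)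
    (j : ℕ) : X ^ 2 ∣ (σ ^ j) X - C (c ^ j) * X := by
  have hX : X ∣ σ X := by
    simpa using dvd_add ((dvd_pow_self X two_ne_zero).trans hc) (dvd_mul_left X (C c))
  induction j with
  | zero => simp
  | succ j ih =>
    have key : (σ ^ (j + 1)) X - C (c ^ (j + 1)) * X =
        (σ ((σ ^ j) X) - σ (C (c ^ j) * X)) + C (c ^ j) * (σ X - C c * X) := by
      rw [algEquiv_pow_succ_apply, map_mul σ, algEquiv_apply_C, pow_succ c, map_mul C]
      ring
    rw [key]
    exact dvd_add (X_pow_dvd_map_sub_map σ hX ih) (dvd_mul_of_dvd_right hc _)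

theorem X_pow_succ_dvd_pow_apply_X_sub (σ : R⟦X⟧ ≃ₐ[R] R⟦X⟧) (hσ : X ^ 2 ∣ σ X - X) {n : ℕ}
    {a : R} (ha : X ^ (n + 1) ∣ σ X - X - C a * X ^ n) (i : ℕ) :
    X ^ (n + 1) ∣ (σ ^ i) X - X - C (i * a) * X ^ n := by
  have hX : X ∣ σ X := by
    simpa using dvd_add ((dvd_pow_self X two_ne_zero).trans hσ) (dvd_refl X)
  induction i with
  | zero => simp
  | succ i ih =>
    rw [sub_sub] at ih
    have key : (σ ^ (i + 1)) X - X - C ((i + 1 : ℕ) * a) * X ^ n =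
        (σ ((σ ^ i) X) - σ (X + C (i * a) * X ^ n)) + (σ X - X - C a * X ^ n) +
          C (i * a) * ((σ X) ^ n - X ^ n) := by
      simp only [algEquiv_pow_succ_apply, Nat.cast_succ, map_add, map_mul, map_pow, map_natCast,
        map_one, algEquiv_apply_C]
      ring
    rw [key]
    exact dvd_add (dvd_add (X_pow_dvd_map_sub_map σ hX ih) ha)
      (dvd_mul_of_dvd_right (X_pow_succ_dvd_pow_sub_X_pow hσ n) _)

theorem algEquiv_eq_one_of_pow_eq_one [IsDomain R] [CharZero R] (σ : R⟦X⟧ ≃ₐ[R] R⟦X⟧) {m : ℕ}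
    (hm : m ≠ 0) (hσm : σ ^ m = 1) (hσ : X ^ 2 ∣ σ X - X) : σ = 1 := by
  refine algEquiv_eq_one_of_apply_X σ (sub_eq_zero.1 ?_)
  by_contra hne
  set n := (σ X - X).order.toNat
  have hlead : X ^ (n + 1) ∣ σ X - X - C (coeff n (σ X - X)) * X ^ n := by
    refine X_pow_dvd_iff.2 fun j hj => ?_
    rw [map_sub, coeff_C_mul_X_pow]
    rcases (Nat.lt_succ_iff.1 hj).lt_or_eq with hj | rfl
    · simp [coeff_of_lt_order_toNat _ hj, hj.ne]
    · simp
  have hm_coeff := X_pow_dvd_iff.1 (X_pow_succ_dvd_pow_apply_X_sub σ hσ hlead m) n n.lt_succ_self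
  rw [hσm, AlgEquiv.one_apply, sub_self, zero_sub, map_neg, coeff_C_mul_X_pow, if_pos rfl,
    neg_eq_zero, mul_eq_zero, Nat.cast_eq_zero] at hm_coeff
  exact coeff_order hne (hm_coeff.resolve_left hm)

end CommRing

section Field

variable {k : Type*} [Field k]

theorem X_dvd_algEquiv_apply_X (σ : k⟦X⟧ ≃ₐ[k] k⟦X⟧) : X ∣ σ X := by
  rw [X_dvd_iff]
  by_contra h
  have hX : IsUnit (X : k⟦X⟧) :=
    (isUnit_map_iff σ X).1 (isUnit_iff_constantCoeff.2 (Ne.isUnit h))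
  simpa using isUnit_iff_constantCoeff.1 hX

theorem X_sq_dvd_apply_X_sub (σ : k⟦X⟧ ≃ₐ[k] k⟦X⟧) : X ^ 2 ∣ σ X - C (coeff 1 (σ X)) * X := by
  refine X_pow_dvd_iff.2 fun j hj => ?_
  interval_cases j
  · simpa using X_dvd_iff.1 (X_dvd_algEquiv_apply_X σ)
  · simp

theorem coeff_one_pow_apply_X (σ : k⟦X⟧ ≃ₐ[k] k⟦X⟧) (j : ℕ) :
    coeff 1 ((σ ^ j) X) = coeff 1 (σ X) ^ j := by
  have := X_pow_dvd_iff.1 (X_sq_dvd_pow_apply_X_sub σ (X_sq_dvd_apply_X_sub σ) j) 1 one_lt_two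
  simpa [sub_eq_zero] using this

theorem isPrimitiveRoot_coeff_one_apply_X [CharZero k] (σ : k⟦X⟧ ≃ₐ[k] k⟦X⟧) {N : ℕ}
    (hN : 0 < N) (hσN : σ ^ N = 1) (hσj : ∀ j : ℕ, 0 < j → j < N → σ ^ j ≠ 1) :
    IsPrimitiveRoot (coeff 1 (σ X)) N := by
  refine IsPrimitiveRoot.mk_of_lt _ hN ?_ fun l hl0 hlN hcl => hσj l hl0 hlN ?_
  · simpa [hσN] using (coeff_one_pow_apply_X σ N).symm
  · refine algEquiv_eq_one_of_pow_eq_one (σ ^ l) hN.ne'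
      (by rw [← pow_mul, mul_comm, pow_mul, hσN, one_pow]) ?_
    simpa [hcl] using X_sq_dvd_pow_apply_X_sub σ (X_sq_dvd_apply_X_sub σ) l

end Field

end PowerSeries

/-- Every automorphism of `ℂ[[t]]` of exact order `N` admits a special
coordinate: a formal coordinate `u` with `σ(u) = ε·u` for a primitive `N`-th
root of unity `ε`. -/
theorem stmt13 (N : ℕ) (hN : 1 ≤ N) (σ : PowerSeries ℂ ≃ₐ[ℂ] PowerSeries ℂ)
    (hσN : σ ^ N = 1) (hσj : ∀ j : ℕ, 0 < j → j < N → σ ^ j ≠ 1) :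
    ∃ (u : PowerSeries ℂ) (ε : ℂ),
      PowerSeries.constantCoeff u = 0 ∧ PowerSeries.coeff 1 u ≠ 0 ∧
      IsPrimitiveRoot ε N ∧ σ u = PowerSeries.C ε * u := by
  set c := coeff 1 (σ X)
  have hc : IsPrimitiveRoot c N := isPrimitiveRoot_coeff_one_apply_X σ hN hσN hσj
  have hc0 : c ≠ 0 := hc.ne_zero (by omega)
  refine ⟨∑ j ∈ Finset.range N, c⁻¹ ^ j • (σ ^ j) X, c, ?_, ?_, hc, ?_⟩
  · refine (map_sum _ _ _).trans (Finset.sum_eq_zero fun j _ => ?_)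
    rw [smul_eq_C_mul, map_mul, X_dvd_iff.1 (X_dvd_algEquiv_apply_X (σ ^ j)), mul_zero]
  · have hterm (j : ℕ) : coeff 1 (c⁻¹ ^ j • (σ ^ j) X) = 1 := by
      rw [map_smul, coeff_one_pow_apply_X, smul_eq_mul, inv_pow,
        inv_mul_cancel₀ (pow_ne_zero j hc0)]
    simp only [map_sum, hterm, Finset.sum_const, Finset.card_range, nsmul_eq_mul, mul_one]
    exact Nat.cast_ne_zero.2 (by omega)
  · rw [← smul_eq_C_mul, ← AlgEquiv.smul_def]
    exact smul_sum_range_inv_pow_smul_pow_smul hσN hc.pow_eq_one X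
end
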